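/- arXiv:1307.0674 — 3 statements merged into one kernel-verified Lean document; each statement's English description precedes it below -/
import Mathlib

section
/- Let $A$ be a commutative algebra over a commutative ring $k$, $\sigma$ a $k$-algebra endomorphism of $A$, and $\partial$ a $\sigma$-twisted derivation on $A$ satisfying $\partial \circ \sigma = q\cdot(\sigma\circ\partial)$ for some $q \in A$. With the bracket $\langle a\cdot\partial, b\cdot\partial\rangle := (\sigma(a)\partial(b) - \sigma(b)\partial(a))\cdot\partial$ on $A\cdot\partial$, the twisted (hom-Lie) Jacobi identity holds: the cyclic sum over $(a,b,c)$ of $\langle \sigma(a)\cdot\partial, \langle b\cdot\partial, c\cdot\partial\rangle\rangle + q\cdot\langle a\cdot\partial, \langle b\cdot\partial, c\cdot\partial\rangle\rangle$ equals zero. -/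
/-!
Expanding the brackets with the twisted Leibniz rule and `∂ ∘ σ = q • σ ∘ ∂`, the cyclic sum
cancels up to a combination of terms `q · σ y · σ(σ x) · ∂(∂ z)`. Expanding `∂(xy) = ∂(yx)` in both orders gives the
twisted commutativity `∂x · (y - σ y) = ∂y · (x - σ x)`; applied to `σ x` it trades `σ(σ x) · ∂(∂ z)`
for terms with fewer iterates of `σ`, and these cancel cyclically.
-/

section TwistedDerivation

variable {A : Type*} [CommRing A] {σ del : A → A}

theorem twistedDerivation_mul_sub_comm (hLeib : ∀ a b : A, del (a * b) = del a * b + σ a * del b)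
    (x y : A) : del x * (y - σ y) = del y * (x - σ x) := by
  linear_combination hLeib y x - hLeib x y + congrArg del (mul_comm x y)

theorem twistedDerivation_mul_sub_map_comm
    (hLeib : ∀ a b : A, del (a * b) = del a * b + σ a * del b) {q : A}
    (hq : ∀ a : A, del (σ a) = q * σ (del a)) (x y : A) :
    del y * (σ x - σ (σ x)) = q * σ (del x) * (y - σ y) := by
  rw [← twistedDerivation_mul_sub_comm hLeib, hq]

end TwistedDerivation

/-- The twisted (hom-Lie) Jacobi identity for the bracket
⟨adel, bdel⟩ = (σ(a)del(b) - σ(b)del(a))del on A·del, when del∘σ = q·σ∘del. -/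
theorem stmt5 {k A : Type*} [CommRing k] [CommRing A] [Algebra k A]
    (σ : A →ₐ[k] A) (del : A →ₗ[k] A)
    (hLeib : ∀ a b : A, del (a * b) = del a * b + σ a * del b)
    (q : A) (hq : ∀ a : A, del (σ a) = q * σ (del a)) :
    let br : A → A → A := fun a b => σ a * del b - σ b * del a
    ∀ a b c : A,
      (br (σ a) (br b c) + q * br a (br b c)) +
      (br (σ b) (br c a) + q * br b (br c a)) +
      (br (σ c) (br a b) + q * br c (br a b)) = 0 := by
  intro br a b c
  have comm := twistedDerivation_mul_sub_map_comm hLeib hq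
  simp only [br, map_sub, map_mul, hLeib, hq]
  linear_combination (q * σ b) * comm a (del c) - (q * σ c) * comm a (del b) -
    (q * σ a) * comm b (del c) + (q * σ c) * comm b (del a) +
    (q * σ a) * comm c (del b) - (q * σ b) * comm c (del a)
end

section
/- Let $K$ be a field with an endomorphism $\sigma \neq \mathrm{id}$. Then every $\sigma$-twisted derivation $\partial: K \to K$ (i.e. additive, $\partial(ab) = \partial(a)b + \sigma(a)\partial(b)$) is of the form $\partial = c\cdot(\mathrm{id} - \sigma)$ for some $c \in K$. -/
/-! Expanding `∂(a x) = ∂(x a)` by the twisted Leibniz rule in both orders gives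
`∂ x · (a - σ a) = ∂ a · (x - σ x)`. Choosing `a` with `σ a ≠ a` and dividing by `a - σ a`
yields `∂ = c · (id - σ)` with `c = ∂ a / (a - σ a)`. -/

theorem twisted_leibniz_mul_sub_comm {R : Type*} [CommRing R] (σ : R →+* R) (d : R → R)
    (hLeib : ∀ a b : R, d (a * b) = d a * b + σ a * d b) (a x : R) :
    d x * (a - σ a) = d a * (x - σ x) := by
  have hax := hLeib a x
  have hxa := hLeib x a
  rw [mul_comm x a, hax] at hxa
  linear_combination -hxa

theorem RingHom.exists_apply_ne_of_ne_id {R : Type*} [Semiring R] {σ : R →+* R}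
    (hσ : σ ≠ RingHom.id R) : ∃ a : R, σ a ≠ a := by
  by_contra! h
  exact hσ (RingHom.ext h)

/-- Over a field K with σ ≠ id, every σ-twisted derivation is c·(id - σ). -/
theorem stmt6 {K : Type*} [Field K] (σ : K →+* K) (hσ : σ ≠ RingHom.id K)
    (del : K →+ K) (hLeib : ∀ a b : K, del (a * b) = del a * b + σ a * del b) :
    ∃ c : K, ∀ x : K, del x = c * (x - σ x) := by
  obtain ⟨a, ha⟩ := RingHom.exists_apply_ne_of_ne_id hσ
  have hne : a - σ a ≠ 0 := sub_ne_zero.mpr ha.symm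
  refine ⟨del a / (a - σ a), fun x => ?_⟩
  rw [div_mul_eq_mul_div, eq_div_iff hne]
  exact twisted_leibniz_mul_sub_comm σ del hLeib a x
end

section
/- Let $R$ be a commutative ring containing an element $\zeta$ and an invertible element $\varepsilon$, and let $\sigma$ be the ring endomorphism of the Laurent polynomial ring $A = R[\varepsilon^{\pm 1}]$ over $R$ fixing $R$ with $\sigma(\varepsilon) = \zeta\varepsilon$, where $\zeta \in R^\times$. Set $\delta_\sigma := \mathrm{id} - \sigma$ and $D_k := -\varepsilon^k\delta_\sigma$ for $k \in \mathbb{Z}$. Then the hom-Lie bracket satisfies the graded relation $\langle D_k, D_\ell\rangle = (\zeta^\ell - \zeta^k) D_{k+\ell}$ for all $k, \ell \in \mathbb{Z}$. -/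
open LaurentPolynomial

namespace LaurentPolynomial

variable {R F : Type*} [CommRing R] [FunLike F R[T;T⁻¹] R[T;T⁻¹]]
  [MonoidHomClass F R[T;T⁻¹] R[T;T⁻¹]]

noncomputable def monomialHom : Multiplicative ℤ →* R[T;T⁻¹] where
  toFun n := T n.toAdd
  map_one' := T_zero
  map_mul' m n := T_add m.toAdd n.toAdd

theorem map_T_of_map_T_one (σ : F) (u : Rˣ) (h : σ (T 1) = C (u : R) * T 1) (n : ℤ) :
    σ (T n) = C ((u ^ n : Rˣ) : R) * T n := by
  let scale : Multiplicative ℤ →* R[T;T⁻¹] :=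
    (Units.coeHom _).comp ((Units.map (C : R →+* R[T;T⁻¹]).toMonoidHom).comp (zpowersHom Rˣ u))
  -- Monoid homs out of `Multiplicative ℤ` are determined by their value at `ofAdd 1`.
  have hom_eq : (σ : R[T;T⁻¹] →* R[T;T⁻¹]).comp monomialHom = scale * monomialHom :=
    MonoidHom.ext_mint (by simpa [scale, monomialHom] using h)
  simpa [scale, monomialHom, ← map_zpow] using congr($hom_eq (Multiplicative.ofAdd n))

end LaurentPolynomial

theorem stmt11_general {R : Type*} [CommRing R] (ζ : Rˣ)
    (σ : LaurentPolynomial R →+* LaurentPolynomial R)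
    (hT : σ (T 1) = C (ζ : R) * T 1) (k l : ℤ) :
    σ (-(T k)) * ((-(T l)) - σ (-(T l))) -
      σ (-(T l)) * ((-(T k)) - σ (-(T k))) =
    (C ((ζ ^ l : Rˣ) : R) - C ((ζ ^ k : Rˣ) : R)) * (-(T (k + l))) := by
  rw [map_neg, map_neg, map_T_of_map_T_one σ ζ hT k, map_T_of_map_T_one σ ζ hT l, T_add]
  ring

/-- For σ the endomorphism of R[ε^{±1}] fixing R with σ(ε) = ζε (ζ a unit),
δ = id - σ and D_k = -ε^k δ, the bracket satisfies
⟨D_k, D_ℓ⟩ = (ζ^ℓ - ζ^k) D_{k+ℓ}, in coefficient form. -/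
theorem stmt11 {R : Type*} [CommRing R] (ζ : Rˣ)
    (σ : LaurentPolynomial R →+* LaurentPolynomial R)
    (hC : ∀ r : R, σ (C r) = C r)
    (hT : σ (T 1) = C (ζ : R) * T 1) (k l : ℤ) :
    σ (-(T k)) * ((-(T l)) - σ (-(T l))) -
      σ (-(T l)) * ((-(T k)) - σ (-(T k))) =
    (C ((ζ ^ l : Rˣ) : R) - C ((ζ ^ k : Rˣ) : R)) * (-(T (k + l))) :=
  stmt11_general ζ σ hT k l
end
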